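/- Over ℚ (or any field of characteristic ≠ 2), the polynomial ŵ₁⁴ − 8ŵ₀³ŵ₂ − 8ŵ₀ŵ₂³, after substituting ŵ₀ = (y₁² − y₃² + y₅² − y₇²)/2, ŵ₁ = (y₀ − y₄)(y₂ − y₆), and ŵ₂ = y₃y₇ − y₁y₅, lies in the ideal of ℚ[y₀,...,y₇] generated by the 2×2 minors of the 4×4 Moore matrix M₄(y,y) = (y_{i+j} y_{i−j} + y_{i+j+4} y_{i−j+4})_{0≤i,j≤3} (indices mod 8). -/

import Mathlib

/-!
Twice the quartic is an explicit polynomial combination of twelve 2 × 2 minors of the Moore matrix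
(all taken from its first three columns); this is an identity over any commutative ring, and the
factor 2 is cancelled because 2 is a unit over ℚ.
-/

open MvPolynomial

variable {R S : Type*} [CommRing R] [CommRing S]

/-- The paper's `M₄(y, y)`: the indices `i ± j (+ 4)` are computed in `Fin 8`, i.e. modulo 8. -/
def mooreMatrix (y : Fin 8 → R) : Matrix (Fin 4) (Fin 4) R := fun i j =>
  y (Fin.castLE (by norm_num) i + Fin.castLE (by norm_num) j) *
      y (Fin.castLE (by norm_num) i - Fin.castLE (by norm_num) j) +
    y (Fin.castLE (by norm_num) i + Fin.castLE (by norm_num) j + 4) *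
      y (Fin.castLE (by norm_num) i - Fin.castLE (by norm_num) j + 4)

theorem mooreMatrix_eq (y : Fin 8 → R) : mooreMatrix y = !![
    y 0 * y 0 + y 4 * y 4, y 1 * y 7 + y 5 * y 3, y 2 * y 6 + y 6 * y 2, y 3 * y 5 + y 7 * y 1;
    y 1 * y 1 + y 5 * y 5, y 2 * y 0 + y 6 * y 4, y 3 * y 7 + y 7 * y 3, y 4 * y 6 + y 0 * y 2;
    y 2 * y 2 + y 6 * y 6, y 3 * y 1 + y 7 * y 5, y 4 * y 0 + y 0 * y 4, y 5 * y 7 + y 1 * y 3;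
    y 3 * y 3 + y 7 * y 7, y 4 * y 2 + y 0 * y 6, y 5 * y 1 + y 1 * y 5, y 6 * y 0 + y 2 * y 4] := by
  ext i j
  fin_cases i <;> fin_cases j <;> rfl

theorem mooreMatrix_map (f : R →+* S) (y : Fin 8 → R) :
    mooreMatrix (f ∘ y) = (mooreMatrix y).map f := by
  ext i j
  simp [mooreMatrix]

def twoMinorsIdeal {m n : Type*} (M : Matrix m n R) : Ideal R :=
  Ideal.span {x | ∃ i₀ i₁ j₀ j₁, x = M i₀ j₀ * M i₁ j₁ - M i₀ j₁ * M i₁ j₀}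

theorem minor_mem_twoMinorsIdeal {m n : Type*} (M : Matrix m n R) (i₀ i₁ : m) (j₀ j₁ : n) :
    M i₀ j₀ * M i₁ j₁ - M i₀ j₁ * M i₁ j₀ ∈ twoMinorsIdeal M :=
  Ideal.subset_span ⟨i₀, i₁, j₀, j₁, rfl⟩

theorem two_mul_quartic_eq_zero_of_minors_eq_zero (y : Fin 8 → R)
    (h : ∀ i₀ i₁ j₀ j₁ : Fin 4, mooreMatrix y i₀ j₀ * mooreMatrix y i₁ j₁ -
      mooreMatrix y i₀ j₁ * mooreMatrix y i₁ j₀ = 0)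
    {w₀ w₁ w₂ : R} (hw₀ : 2 * w₀ = y 1 ^ 2 - y 3 ^ 2 + y 5 ^ 2 - y 7 ^ 2)
    (hw₁ : w₁ = (y 0 - y 4) * (y 2 - y 6)) (hw₂ : w₂ = y 3 * y 7 - y 1 * y 5) :
    2 * (w₁ ^ 4 - 8 * w₀ ^ 3 * w₂ - 8 * w₀ * w₂ ^ 3) = 0 := by
  rw [mooreMatrix_eq] at h
  calc 2 * (w₁ ^ 4 - 8 * w₀ ^ 3 * w₂ - 8 * w₀ * w₂ ^ 3)
      = 2 * w₁ ^ 4 - 2 * (2 * w₀) ^ 3 * w₂ - 8 * (2 * w₀) * w₂ ^ 3 := by ring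
    _ = 0 := by
      rw [hw₀, hw₁, hw₂]
      linear_combination (norm := skip)
        (2 * y 5 ^ 3 * y 7 + 10 * y 4 * y 6 ^ 3 - 40 * y 2 * y 4 * y 6 ^ 2 +
          28 * y 2 ^ 2 * y 4 * y 6 - 8 * y 2 ^ 3 * y 4 + 22 * y 1 * y 3 * y 5 ^ 2 +
          6 * y 1 ^ 2 * y 5 * y 7 + 2 * y 1 ^ 3 * y 3 - 8 * y 0 * y 6 ^ 3 +
          12 * y 0 * y 2 * y 6 ^ 2 - 8 * y 0 * y 2 ^ 2 * y 6 + 2 * y 0 * y 2 ^ 3) * h 0 1 0 1 +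
        (16 * y 3 * y 4 * y 5 * y 6 - 13 * y 2 * y 3 * y 4 * y 5 + 16 * y 1 * y 4 * y 6 * y 7 -
          9 * y 1 * y 2 * y 4 * y 7 - 9 * y 0 * y 3 * y 5 * y 6 -
          5 * y 0 * y 1 * y 6 * y 7) * h 0 1 0 2 +
        (-16 * y 4 ^ 3 * y 6 + 3 * y 3 * y 5 * y 7 ^ 2 + 11 * y 3 ^ 3 * y 5 + 4 * y 2 * y 4 ^ 3 +
          3 * y 1 * y 7 ^ 3 - 5 * y 1 * y 3 ^ 2 * y 7 - 4 * y 0 * y 4 ^ 2 * y 6 +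
          16 * y 0 * y 2 * y 4 ^ 2) * h 0 1 1 2 +
        (-10 * y 4 * y 5 ^ 2 * y 6 - 2 * y 2 * y 4 * y 7 ^ 2 + 8 * y 2 * y 4 * y 5 ^ 2 -
          2 * y 2 * y 3 ^ 2 * y 4 - 10 * y 1 ^ 2 * y 4 * y 6 + 8 * y 1 ^ 2 * y 2 * y 4 -
          2 * y 0 * y 6 * y 7 ^ 2 + 8 * y 0 * y 5 ^ 2 * y 6 - 2 * y 0 * y 3 ^ 2 * y 6 -
          2 * y 0 * y 2 * y 5 ^ 2 + 8 * y 0 * y 1 ^ 2 * y 6 -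
          2 * y 0 * y 1 ^ 2 * y 2) * h 0 2 0 1 +
        (8 * y 3 * y 4 * y 6 * y 7 - 16 * y 2 * y 3 * y 4 * y 7 + 4 * y 1 * y 2 * y 4 * y 5 -
          16 * y 0 * y 3 * y 6 * y 7 + 8 * y 0 * y 2 * y 3 * y 7 +
          4 * y 0 * y 1 * y 5 * y 6) * h 0 2 1 2 +
        (2 * y 5 * y 7 ^ 3 - 8 * y 5 ^ 3 * y 7 + 20 * y 3 ^ 2 * y 5 * y 7 +
          8 * y 2 * y 4 * y 6 ^ 2 + 2 * y 2 ^ 3 * y 4 + 12 * y 1 * y 3 * y 7 ^ 2 -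
          8 * y 1 * y 3 * y 5 ^ 2 + 2 * y 1 * y 3 ^ 3 - 40 * y 1 ^ 2 * y 5 * y 7 -
          8 * y 1 ^ 3 * y 3 + 2 * y 0 * y 6 ^ 3) * h 0 3 0 1 +
        (-14 * y 3 * y 4 * y 5 * y 6 - 6 * y 1 * y 4 * y 6 * y 7 + 16 * y 1 * y 2 * y 4 * y 7 -
          10 * y 0 * y 2 * y 3 * y 5 + 16 * y 0 * y 1 * y 6 * y 7 -
          2 * y 0 * y 1 * y 2 * y 7) * h 0 3 0 2 +
        (4 * y 4 ^ 3 * y 6 + 16 * y 3 * y 5 * y 7 ^ 2 + 4 * y 3 * y 5 ^ 3 - 16 * y 1 * y 7 ^ 3 -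
          4 * y 1 * y 5 ^ 2 * y 7 - 4 * y 0 * y 2 * y 4 ^ 2) * h 0 3 1 2 +
        (8 * y 4 ^ 3 * y 6 - 8 * y 0 * y 2 * y 4 ^ 2) * h 1 2 0 1 +
        (4 * y 5 * y 7 ^ 3 + 4 * y 1 * y 3 ^ 3) * h 1 2 1 2 +
        (8 * y 0 * y 4 * y 5 * y 7 + 8 * y 0 * y 1 * y 3 * y 4) * h 1 3 0 1 +
        (-y 7 ^ 4 - 2 * y 5 ^ 2 * y 7 ^ 2 + y 5 ^ 4 - 6 * y 3 ^ 2 * y 7 ^ 2 +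
          4 * y 3 ^ 2 * y 5 ^ 2 - y 3 ^ 4 + 6 * y 1 ^ 2 * y 5 ^ 2 - 2 * y 1 ^ 2 * y 3 ^ 2 +
          y 1 ^ 4) * h 1 3 0 2
      simp only [Matrix.of_apply, Matrix.cons_val]
      ring1

theorem map_quartic_eq_zero_of_map_minors_eq_zero (f : R →+* S) (h2 : IsUnit (2 : S))
    (y : Fin 8 → R) (hf : ∀ i₀ i₁ j₀ j₁ : Fin 4, f (mooreMatrix y i₀ j₀ * mooreMatrix y i₁ j₁ -
      mooreMatrix y i₀ j₁ * mooreMatrix y i₁ j₀) = 0)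
    {w₀ w₁ w₂ : R} (hw₀ : 2 * w₀ = y 1 ^ 2 - y 3 ^ 2 + y 5 ^ 2 - y 7 ^ 2)
    (hw₁ : w₁ = (y 0 - y 4) * (y 2 - y 6)) (hw₂ : w₂ = y 3 * y 7 - y 1 * y 5) :
    f (w₁ ^ 4 - 8 * w₀ ^ 3 * w₂ - 8 * w₀ * w₂ ^ 3) = 0 := by
  refine h2.mul_left_cancel ?_
  simpa [map_ofNat] using two_mul_quartic_eq_zero_of_minors_eq_zero (f ∘ y)
    (by simpa [mooreMatrix_map] using hf) (w₁ := f w₁) (w₂ := f w₂)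
    (by simpa [map_ofNat] using congrArg f hw₀) (by simp [hw₁]) (by simp [hw₂])

theorem quartic_mem_twoMinorsIdeal (y : Fin 8 → R) (h2 : IsUnit (2 : R))
    {w₀ w₁ w₂ : R} (hw₀ : 2 * w₀ = y 1 ^ 2 - y 3 ^ 2 + y 5 ^ 2 - y 7 ^ 2)
    (hw₁ : w₁ = (y 0 - y 4) * (y 2 - y 6)) (hw₂ : w₂ = y 3 * y 7 - y 1 * y 5) :
    w₁ ^ 4 - 8 * w₀ ^ 3 * w₂ - 8 * w₀ * w₂ ^ 3 ∈ twoMinorsIdeal (mooreMatrix y) := by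
  rw [← Ideal.Quotient.eq_zero_iff_mem]
  refine map_quartic_eq_zero_of_map_minors_eq_zero _ ?_ y
    (fun i₀ i₁ j₀ j₁ ↦ Ideal.Quotient.eq_zero_iff_mem.2 (minor_mem_twoMinorsIdeal _ i₀ i₁ j₀ j₁))
    hw₀ hw₁ hw₂
  simpa [map_ofNat] using h2.map (Ideal.Quotient.mk (twoMinorsIdeal (mooreMatrix y)))

/-- In ℚ[y₀,…,y₇], the polynomial ŵ₁⁴ − 8ŵ₀³ŵ₂ − 8ŵ₀ŵ₂³, with
ŵ₀ = (y₁² − y₃² + y₅² − y₇²)/2, ŵ₁ = (y₀ − y₄)(y₂ − y₆), ŵ₂ = y₃y₇ − y₁y₅,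
lies in the ideal generated by the 2×2 minors of the Moore matrix
M₄(y,y) = (y_{i+j} y_{i−j} + y_{i+j+4} y_{i−j+4}) (indices mod 8). -/
theorem quartic_in_minors_ideal :
    ∀ M : Matrix (Fin 4) (Fin 4) (MvPolynomial (Fin 8) ℚ),
      (M = fun i j =>
        X (Fin.castLE (by norm_num) i + Fin.castLE (by norm_num) j) *
            X (Fin.castLE (by norm_num) i - Fin.castLE (by norm_num) j) +
          X (Fin.castLE (by norm_num) i + Fin.castLE (by norm_num) j + 4) *
            X (Fin.castLE (by norm_num) i - Fin.castLE (by norm_num) j + 4)) →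
    ∀ w₀ w₁ w₂ : MvPolynomial (Fin 8) ℚ,
      w₀ = C (1/2 : ℚ) * (X 1 ^ 2 - X 3 ^ 2 + X 5 ^ 2 - X 7 ^ 2) →
      w₁ = (X 0 - X 4) * (X 2 - X 6) →
      w₂ = X 3 * X 7 - X 1 * X 5 →
      w₁ ^ 4 - 8 * w₀ ^ 3 * w₂ - 8 * w₀ * w₂ ^ 3 ∈
        Ideal.span {m : MvPolynomial (Fin 8) ℚ |
          ∃ i₀ i₁ j₀ j₁ : Fin 4, m = M i₀ j₀ * M i₁ j₁ - M i₀ j₁ * M i₁ j₀} := by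
  intro M hM w₀ w₁ w₂ hw₀ hw₁ hw₂
  have h2w₀ : 2 * w₀ = X 1 ^ 2 - X 3 ^ 2 + X 5 ^ 2 - X 7 ^ 2 := by
    rw [hw₀, ← mul_assoc, ← map_ofNat C 2, ← C_mul]
    norm_num
  have h2 : IsUnit (2 : MvPolynomial (Fin 8) ℚ) := by
    rw [← map_ofNat C 2]
    exact (IsUnit.mk0 (2 : ℚ) two_ne_zero).map C
  subst hM
  exact quartic_mem_twoMinorsIdeal X h2 h2w₀ hw₁ hw₂
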